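/- Let d = 2. For every q̄ = (q_1,…,q_{n−1}) ∈ (ℝ²)^{n−1} such that the full configuration (q_1,…,q_{n−1}, q_n(q̄)) is collision-free, the planar angular momentum identity Σ_{i=1}^{n−1} m_i ( (x_i − x_n) F^red_{i,y}(q̄) − (y_i − y_n) F^red_{i,x}(q̄) ) = 0 holds, where q_i = (x_i, y_i), (x_n, y_n) = q_n(q̄), and F^red_{i,x}, F^red_{i,y} are the two components of F^red_i. -/

import Mathlib

open scoped BigOperators

noncomputable section

/-- Points in `ℝ^d`, with the Euclidean norm. -/
abbrev Pt (d : ℕ) := EuclideanSpace ℝ (Fin d)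

/-- `F_i(q) = −q_i + Σ_{j ≠ i} m_j (q_j − q_i)/‖q_j − q_i‖³`. -/
noncomputable def nbodyF {d n : ℕ} (m : Fin n → ℝ) (q : Fin n → Pt d) : Fin n → Pt d :=
  fun i => -q i + ∑ j ∈ Finset.univ.erase i, (m j / ‖q j - q i‖ ^ 3) • (q j - q i)

/-- A configuration is collision-free if all bodies occupy distinct positions. -/
def CollisionFree {d n : ℕ} (q : Fin n → Pt d) : Prop :=
  ∀ i j, i ≠ j → q i ≠ q j

/-- A normalized central configuration: collision-free, center of mass at the origin,
and `F(q) = 0`. -/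
def IsNCC {d n : ℕ} (m : Fin n → ℝ) (q : Fin n → Pt d) : Prop :=
  CollisionFree q ∧ (∑ i, m i • q i) = 0 ∧ nbodyF m q = 0

/-- Embedding of the reduced index set `{1,…,n−1}` into `{1,…,n}`. -/
def emb {n : ℕ} (i : Fin (n - 1)) : Fin n := Fin.castLE (Nat.sub_le n 1) i

/-- Extend a reduced configuration `q̄ = (q_1,…,q_{n−1})` by the position of the last body,
`q_n(q̄) = −(1/m_n) Σ_{i<n} m_i q_i`, computed from the center of mass condition. -/
noncomputable def extendConfig {d n : ℕ} (m : Fin n → ℝ) (qbar : Fin (n - 1) → Pt d) :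
    Fin n → Pt d :=
  fun i => if h : (i : ℕ) < n - 1 then qbar ⟨i, h⟩
    else (-(1 / m i)) • ∑ j : Fin (n - 1), m (emb j) • qbar j

/-- The center-of-mass reduced map `F^red_i(q̄) = F_i(q_1,…,q_{n−1},q_n(q̄))`, `i = 1,…,n−1`. -/
noncomputable def Fred {d n : ℕ} (m : Fin n → ℝ) (qbar : Fin (n - 1) → Pt d) :
    Fin (n - 1) → Pt d :=
  fun i => nbodyF m (extendConfig m qbar) (emb i)

/-- The Jacobian matrix of `F`, rows and columns indexed by (body, coordinate). -/
noncomputable def jacF {d n : ℕ} (m : Fin n → ℝ) (q : Fin n → Pt d) :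
    Matrix (Fin n × Fin d) (Fin n × Fin d) ℝ :=
  fun p p' =>
    fderiv ℝ (fun q' : Fin n → Pt d => nbodyF m q' p.1 p.2) q
      (Pi.single p'.1 (EuclideanSpace.single p'.2 (1 : ℝ)))

/-- The Jacobian matrix of `F^red`, rows and columns indexed by (body, coordinate). -/
noncomputable def jacFred {d n : ℕ} (m : Fin n → ℝ) (qbar : Fin (n - 1) → Pt d) :
    Matrix (Fin (n - 1) × Fin d) (Fin (n - 1) × Fin d) ℝ :=
  fun p p' =>
    fderiv ℝ (fun q' : Fin (n - 1) → Pt d => Fred m q' p.1 p.2) qbar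
      (Pi.single p'.1 (EuclideanSpace.single p'.2 (1 : ℝ)))

lemma antisym_sum' {α : Type*} [Fintype α] [DecidableEq α] (g : α → α → ℝ)
    (h : ∀ i j, g j i = - g i j) :
    ∑ i, ∑ j ∈ Finset.univ.erase i, g i j = 0 := by
  have hswap : ∑ i, ∑ j ∈ Finset.univ.erase i, g i j
      = ∑ j, ∑ i ∈ Finset.univ.erase j, g i j := by
    apply Finset.sum_comm'
    intro x y
    simp [Finset.mem_erase, ne_comm]
  have h2 : ∑ j, ∑ i ∈ Finset.univ.erase j, g i j
      = - ∑ j, ∑ i ∈ Finset.univ.erase j, g j i := by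
    rw [← Finset.sum_neg_distrib]
    refine Finset.sum_congr rfl fun j _ => ?_
    rw [← Finset.sum_neg_distrib]
    exact Finset.sum_congr rfl fun i _ => h j i
  have := hswap.trans h2
  linarith

lemma sum_apply_pt {ι : Type*} (s : Finset ι) (f : ι → Pt 2) (c : Fin 2) :
    (∑ j ∈ s, f j) c = ∑ j ∈ s, f j c := by
  classical
  induction s using Finset.induction_on with
  | empty => simp
  | insert a s ha ih => rw [Finset.sum_insert ha, Finset.sum_insert ha, PiLp.add_apply, ih]


/-- the planar angular momentum identity
`Σ_{i<n} m_i ((x_i − x_n) F^red_{i,y}(q̄) − (y_i − y_n) F^red_{i,x}(q̄)) = 0` for any `q̄`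
whose extended configuration is collision-free (here `x = 0`, `y = 1`). -/
theorem stmt16 {n : ℕ} (hn : 3 ≤ n) (m : Fin n → ℝ) (hm : ∀ i, 0 < m i)
    (qbar : Fin (n - 1) → Pt 2) (hfree : CollisionFree (extendConfig m qbar)) :
    ∑ i : Fin (n - 1), m (emb i) *
      ((qbar i 0 - extendConfig m qbar ⟨n - 1, by omega⟩ 0) * Fred m qbar i 1 -
        (qbar i 1 - extendConfig m qbar ⟨n - 1, by omega⟩ 1) * Fred m qbar i 0) = 0 := by
  clear hfree
  set q := extendConfig m qbar with hq
  have hn1 : n - 1 < n := by omega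
  set N : Fin n := ⟨n - 1, hn1⟩ with hN
  have hqemb : ∀ i : Fin (n - 1), q (emb i) = qbar i := by
    intro i
    have hi : ((emb i : Fin n) : ℕ) < n - 1 := i.isLt
    rw [hq, extendConfig]
    simp only [dif_pos hi]
    exact congrArg qbar (Fin.ext rfl)
  have hqN : q N = (-(1 / m N)) • ∑ j : Fin (n - 1), m (emb j) • qbar j := by
    rw [hq, extendConfig]
    simp only [hN]
    rw [dif_neg (by omega)]
  -- coordinates of nbodyF
  have hF : ∀ (k : Fin n) (c : Fin 2), nbodyF m q k c
      = -q k c + ∑ j ∈ Finset.univ.erase k, m j / ‖q j - q k‖ ^ 3 * (q j c - q k c) := by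
    intro k c
    change (-q k + ∑ j ∈ Finset.univ.erase k, (m j / ‖q j - q k‖ ^ 3) • (q j - q k)) c = _
    rw [PiLp.add_apply, PiLp.neg_apply, sum_apply_pt]
    exact congrArg (-q k c + ·) (Finset.sum_congr rfl fun j _ => by
      rw [PiLp.smul_apply, PiLp.sub_apply, smul_eq_mul])
  -- erase N is the image of emb
  have hinj : Function.Injective (emb (n := n)) := fun a b hab => by
    have := congrArg Fin.val hab; exact Fin.ext this
  have himg : Finset.univ.erase N = Finset.image emb Finset.univ := by
    ext k
    simp only [Finset.mem_erase, Finset.mem_univ, and_true, Finset.mem_image, true_and]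
    constructor
    · intro hk
      have hk' : (k : ℕ) < n - 1 := by
        rcases Nat.lt_or_ge (k : ℕ) (n - 1) with h | h
        · exact h
        · have h1 := k.isLt
          exact absurd (Fin.ext (show (k : ℕ) = n - 1 by omega)) hk
      exact ⟨⟨k, hk'⟩, Fin.ext rfl⟩
    · rintro ⟨i, rfl⟩
      intro hcon
      have h1 : (i : ℕ) = n - 1 := congrArg Fin.val hcon
      have := i.isLt
      omega
  have hsum_emb : ∀ (f : Fin n → ℝ),
      ∑ i : Fin (n - 1), f (emb i) = ∑ k ∈ Finset.univ.erase N, f k := by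
    intro f
    rw [himg, Finset.sum_image (fun a _ b _ h => hinj h)]
  have hmN : m N ≠ 0 := ne_of_gt (hm N)
  -- center of mass is zero
  have hcom : ∀ c : Fin 2, ∑ k, m k * q k c = 0 := by
    intro c
    have hsplit := (Finset.add_sum_erase Finset.univ (fun k => m k * q k c)
      (Finset.mem_univ N)).symm
    have h1 : ∑ k ∈ Finset.univ.erase N, m k * q k c
        = ∑ j : Fin (n - 1), m (emb j) * qbar j c := by
      rw [← hsum_emb]
      exact Finset.sum_congr rfl fun j _ => by rw [hqemb]
    have h2 : q N c = -(1 / m N) * ∑ j : Fin (n - 1), m (emb j) * qbar j c := by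
      have e : ∀ j : Fin (n - 1), (m (emb j) • qbar j) c = m (emb j) * qbar j c :=
        fun j => by rw [PiLp.smul_apply, smul_eq_mul]
      rw [hqN, PiLp.smul_apply, sum_apply_pt, smul_eq_mul,
        Finset.sum_congr rfl fun j _ => e j]
    rw [hsplit, h1, h2]
    field_simp
    ring
  -- total force is zero
  have hFsum : ∀ c : Fin 2, ∑ k, m k * nbodyF m q k c = 0 := by
    intro c
    have hterm : ∀ k : Fin n, m k * nbodyF m q k c
        = m k * -q k c + ∑ j ∈ Finset.univ.erase k,
            m k * (m j / ‖q j - q k‖ ^ 3 * (q j c - q k c)) := by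
      intro k
      rw [hF k c, mul_add, Finset.mul_sum]
    rw [Finset.sum_congr rfl fun k _ => hterm k, Finset.sum_add_distrib]
    have e1 : ∑ k : Fin n, m k * -q k c = 0 := by
      have : ∀ k : Fin n, m k * -q k c = -(m k * q k c) := fun k => by ring
      rw [Finset.sum_congr rfl fun k _ => this k, Finset.sum_neg_distrib, hcom, neg_zero]
    have e2 : ∑ k : Fin n, ∑ j ∈ Finset.univ.erase k,
        m k * (m j / ‖q j - q k‖ ^ 3 * (q j c - q k c)) = 0 := by
      apply antisym_sum'
      intro i j
      rw [norm_sub_rev (q j) (q i)]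
      ring
    rw [e1, e2, add_zero]
  -- angular momentum about the origin is zero
  have hA : ∑ k, m k * (q k 0 * nbodyF m q k 1 - q k 1 * nbodyF m q k 0) = 0 := by
    have expand : ∀ (mk a b S1 S0 : ℝ),
        mk * (a * (-b + S1) - b * (-a + S0)) = mk * (a * S1) - mk * (b * S0) := by
      intros; ring
    have hterm : ∀ k : Fin n, m k * (q k 0 * nbodyF m q k 1 - q k 1 * nbodyF m q k 0)
        = ∑ j ∈ Finset.univ.erase k,
            m k * (m j / ‖q j - q k‖ ^ 3) * (q k 0 * q j 1 - q k 1 * q j 0) := by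
      intro k
      rw [hF k 0, hF k 1, expand]
      simp only [Finset.mul_sum]
      rw [← Finset.sum_sub_distrib]
      exact Finset.sum_congr rfl fun j _ => by ring
    rw [Finset.sum_congr rfl fun k _ => hterm k]
    apply antisym_sum'
    intro i j
    rw [norm_sub_rev (q j) (q i)]
    ring
  -- assemble
  have hgoal : ∀ i : Fin (n - 1), m (emb i) *
      ((qbar i 0 - extendConfig m qbar ⟨n - 1, by omega⟩ 0) * Fred m qbar i 1 -
        (qbar i 1 - extendConfig m qbar ⟨n - 1, by omega⟩ 1) * Fred m qbar i 0)
      = (fun k => m k * ((q k 0 - q N 0) * nbodyF m q k 1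
          - (q k 1 - q N 1) * nbodyF m q k 0)) (emb i) := by
    intro i
    simp only [hqemb, Fred]
    rfl
  have hsplit := (Finset.add_sum_erase Finset.univ (fun k => m k * ((q k 0 - q N 0) *
      nbodyF m q k 1 - (q k 1 - q N 1) * nbodyF m q k 0)) (Finset.mem_univ N)).symm
  have htot : ∑ k : Fin n, m k * ((q k 0 - q N 0) * nbodyF m q k 1
      - (q k 1 - q N 1) * nbodyF m q k 0) = 0 := by
    have hterm : ∀ k : Fin n, m k * ((q k 0 - q N 0) * nbodyF m q k 1
        - (q k 1 - q N 1) * nbodyF m q k 0)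
        = m k * (q k 0 * nbodyF m q k 1 - q k 1 * nbodyF m q k 0)
          - (q N 0 * (m k * nbodyF m q k 1) - q N 1 * (m k * nbodyF m q k 0)) := by
      intro k; ring
    rw [Finset.sum_congr rfl fun k _ => hterm k, Finset.sum_sub_distrib, hA,
      Finset.sum_sub_distrib, ← Finset.mul_sum, ← Finset.mul_sum, hFsum, hFsum]
    ring
  have key : ∑ i : Fin (n - 1), (fun k => m k * ((q k 0 - q N 0) * nbodyF m q k 1
      - (q k 1 - q N 1) * nbodyF m q k 0)) (emb i) = 0 := by
    rw [hsum_emb (fun k => m k * ((q k 0 - q N 0) * nbodyF m q k 1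
      - (q k 1 - q N 1) * nbodyF m q k 0))]
    rw [htot] at hsplit
    have hz : m N * ((q N 0 - q N 0) * nbodyF m q N 1
        - (q N 1 - q N 1) * nbodyF m q N 0) = 0 := by ring
    linarith [hsplit, hz]
  exact (Finset.sum_congr rfl fun i _ => hgoal i).trans key
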